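/- Assume σ_p = sup_{x∈(0,D)} μ(0,x) ν̂(x,D)^(p-1) < ∞ and ν̂(x,D) < ∞ for all x ∈ (0,D). Define δ̄₁ = sup_{x∈(0,D)} [ μ(0,x) ν̂(x,D)^(p-1) + (1/ν̂(x,D)) ∫_x^D ν̂(t,D)^p μ(dt) ]. Then σ_p ≤ δ̄₁ ≤ p σ_p. -/

import Mathlib

/-!
Write `N x = ∫ₓᴰ v ^ (1 - p*)` and `M x = ∫₀ˣ u`. The lower bound `σ_p ≤ δ̄₁` holds because the
second summand of `δ̄₁` is nonnegative. For the upper bound, `N` is absolutely continuous with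
`N' = -v ^ (1 - p*)` a.e., so the fundamental theorem of calculus applied to `N ^ p` gives
`N t ^ p = p ∫ₜᴰ N ^ (p - 1) v ^ (1 - p*)`. Inserting this into `∫ₓᴰ N ^ p u` and exchanging the
order of integration,
  `∫ₓᴰ N ^ p u = p ∫ₓᴰ N (s) ^ (p - 1) v (s) ^ (1 - p*) (M s - M x) ds`
  `            ≤ p σ_p N x - M x N x ^ p`
because `M s N s ^ (p - 1) ≤ σ_p`. Dividing by `N x` bounds each term of `δ̄₁` by `p σ_p`.
-/

open MeasureTheory Set Filter
open scoped NNReal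

theorem LipschitzOnWith.comp_absolutelyContinuousOnInterval {X Y : Type*}
    [PseudoMetricSpace X] [PseudoMetricSpace Y] {g : X → Y} {K : ℝ≥0} {s : Set X}
    (hg : LipschitzOnWith K g s) {f : ℝ → X} {a b : ℝ}
    (hf : AbsolutelyContinuousOnInterval f a b) (hfs : MapsTo f (uIcc a b) s) :
    AbsolutelyContinuousOnInterval (g ∘ f) a b := by
  unfold AbsolutelyContinuousOnInterval at hf ⊢
  have hK := hf.const_mul (K : ℝ)
  rw [mul_zero] at hK
  refine squeeze_zero' (Eventually.of_forall fun E => Finset.sum_nonneg fun _ _ => dist_nonneg)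
    (eventually_inf_principal.2 (Eventually.of_forall fun E hE => ?_)) hK
  rw [Finset.mul_sum]
  exact Finset.sum_le_sum fun i hi =>
    hg.dist_le_mul _ (hfs (hE.1 i hi).1) _ (hfs (hE.1 i hi).2)

theorem ContDiff.comp_absolutelyContinuousOnInterval {E F : Type*} [NormedAddCommGroup E]
    [NormedSpace ℝ E] [NormedAddCommGroup F] [NormedSpace ℝ F] {g : E → F}
    (hg : ContDiff ℝ 1 g) {f : ℝ → E} {a b : ℝ}
    (hf : AbsolutelyContinuousOnInterval f a b) :
    AbsolutelyContinuousOnInterval (g ∘ f) a b := by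
  obtain ⟨K, hK⟩ := hg.locallyLipschitz.locallyLipschitzOn.exists_lipschitzOnWith_of_compact
    (isCompact_uIcc.image_of_continuousOn hf.continuousOn)
  exact hK.comp_absolutelyContinuousOnInterval hf (mapsTo_image f _)

namespace intervalIntegral

variable {p a b : ℝ} {W : ℝ → ℝ}

theorem absolutelyContinuousOnInterval_integral_right (hW : IntervalIntegrable W volume a b) :
    AbsolutelyContinuousOnInterval (fun s => ∫ r in s..b, W r) a b := by
  rw [show (fun s => ∫ r in s..b, W r) = -fun s => ∫ r in b..s, W r from
    funext fun s => integral_symm b s]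
  exact (hW.absolutelyContinuousOnInterval_intervalIntegral right_mem_uIcc).neg

theorem intervalIntegrable_rpow_integral_right_mul (hp : 1 ≤ p)
    (hW : IntervalIntegrable W volume a b) :
    IntervalIntegrable (fun s => (∫ r in s..b, W r) ^ (p - 1) * W s) volume a b :=
  hW.continuousOn_mul ((absolutelyContinuousOnInterval_integral_right hW).continuousOn.rpow_const
    fun _ _ => Or.inr (by linarith))

theorem integral_rpow_integral_right_mul (hp : 1 ≤ p) (hW : IntervalIntegrable W volume a b) :
    ∫ s in a..b, (∫ r in s..b, W r) ^ (p - 1) * W s = (∫ r in a..b, W r) ^ p / p := by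
  set N : ℝ → ℝ := fun s => ∫ r in s..b, W r
  have hderiv : ∀ᵐ s, s ∈ uIcc a b →
      HasDerivAt (fun s => N s ^ p) (-(p * (N s ^ (p - 1) * W s))) s := by
    filter_upwards [hW.ae_hasDerivAt_integral] with s hs hsab
    have hN : HasDerivAt N (-W s) s := by
      rw [show N = -fun s => ∫ r in b..s, W r from funext fun s => integral_symm b s]
      exact (hs hsab b right_mem_uIcc).neg
    convert hN.rpow_const (Or.inr hp) using 1
    ring
  have hAC : AbsolutelyContinuousOnInterval (fun s => N s ^ p) a b :=
    ContDiff.comp_absolutelyContinuousOnInterval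
      (Real.contDiff_rpow_const_of_le (n := 1) (by exact_mod_cast hp))
      (absolutelyContinuousOnInterval_integral_right hW)
  have hFTC := hAC.integral_deriv_eq_sub
  have hcongr : ∫ s in a..b, deriv (fun s => N s ^ p) s
      = ∫ s in a..b, -(p * (N s ^ (p - 1) * W s)) := by
    refine integral_congr_ae ?_
    filter_upwards [hderiv] with s hs hsab using (hs (uIoc_subset_uIcc hsab)).deriv
  rw [hcongr, integral_neg, integral_const_mul] at hFTC
  simp only [N, integral_same, Real.zero_rpow (by linarith : p ≠ 0)] at hFTC
  field_simp
  linarith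

end intervalIntegral

section SetIntegralIoo

variable {p a b c : ℝ} {f g W : ℝ → ℝ}

theorem setIntegral_Ioo_eq_intervalIntegral (hab : a ≤ b) :
    ∫ x in Ioo a b, f x = ∫ x in a..b, f x := by
  rw [intervalIntegral.integral_of_le hab, integral_Ioc_eq_integral_Ioo]

theorem setIntegral_Ioo_add_setIntegral_Ioo (hab : a ≤ b) (hbc : b ≤ c)
    (hf : IntegrableOn f (Ioo a c)) :
    (∫ x in Ioo a b, f x) + ∫ x in Ioo b c, f x = ∫ x in Ioo a c, f x := by
  rw [setIntegral_Ioo_eq_intervalIntegral hab, setIntegral_Ioo_eq_intervalIntegral hbc,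
    setIntegral_Ioo_eq_intervalIntegral (hab.trans hbc)]
  exact intervalIntegral.integral_add_adjacent_intervals
    ((intervalIntegrable_iff_integrableOn_Ioo_of_le hab).2
      (hf.mono_set (Ioo_subset_Ioo_right hbc)))
    ((intervalIntegrable_iff_integrableOn_Ioo_of_le hbc).2
      (hf.mono_set (Ioo_subset_Ioo_left hab)))

theorem setIntegral_Ioo_pos (hab : a < b) (hf : IntegrableOn f (Ioo a b))
    (hpos : ∀ x ∈ Ioo a b, 0 < f x) : 0 < ∫ x in Ioo a b, f x := by
  rw [setIntegral_Ioo_eq_intervalIntegral hab.le]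
  exact intervalIntegral.intervalIntegral_pos_of_pos_on
    ((intervalIntegrable_iff_integrableOn_Ioo_of_le hab.le).2 hf) hpos hab

theorem aestronglyMeasurable_Ioo_of_forall_integrableOn
    (hf : ∀ y ∈ Ioo a b, IntegrableOn f (Ioo a y)) :
    AEStronglyMeasurable f (volume.restrict (Ioo a b)) := by
  refine LocallyIntegrableOn.aestronglyMeasurable fun z hz => ?_
  refine ⟨Ioo a ((z + b) / 2), mem_nhdsWithin_of_mem_nhds (Ioo_mem_nhds hz.1 ?_),
    hf _ ⟨?_, ?_⟩⟩
  all_goals linarith [hz.1, hz.2]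

theorem integrableOn_Ioo_rpow_integral_mul (hp : 1 ≤ p) (hab : a ≤ b)
    (hW : IntegrableOn W (Ioo a b)) :
    IntegrableOn (fun s => (∫ r in Ioo s b, W r) ^ (p - 1) * W s) (Ioo a b) := by
  refine IntegrableOn.congr_fun ((intervalIntegrable_iff_integrableOn_Ioo_of_le hab).1
    (intervalIntegral.intervalIntegrable_rpow_integral_right_mul hp
      ((intervalIntegrable_iff_integrableOn_Ioo_of_le hab).2 hW))) (fun s hs => ?_)
    measurableSet_Ioo
  rw [setIntegral_Ioo_eq_intervalIntegral hs.2.le]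

theorem setIntegral_Ioo_rpow_integral_mul (hp : 1 ≤ p) (hab : a ≤ b)
    (hW : IntegrableOn W (Ioo a b)) :
    ∫ s in Ioo a b, (∫ r in Ioo s b, W r) ^ (p - 1) * W s
      = (∫ r in Ioo a b, W r) ^ p / p := by
  rw [setIntegral_congr_fun measurableSet_Ioo fun s hs => by
      rw [setIntegral_Ioo_eq_intervalIntegral hs.2.le],
    setIntegral_Ioo_eq_intervalIntegral hab, setIntegral_Ioo_eq_intervalIntegral hab]
  exact intervalIntegral.integral_rpow_integral_right_mul hp
    ((intervalIntegrable_iff_integrableOn_Ioo_of_le hab).2 hW)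

theorem setIntegral_Ioo_mul_setIntegral_Ioo_swap
    (hf : ∀ t ∈ Ioo a b, 0 ≤ f t) (hg : ∀ s ∈ Ioo a b, 0 ≤ g s)
    (hfm : AEStronglyMeasurable f (volume.restrict (Ioo a b))) (hgi : IntegrableOn g (Ioo a b))
    (hfg : IntegrableOn (fun t => f t * ∫ s in Ioo t b, g s) (Ioo a b)) :
    ∫ t in Ioo a b, f t * ∫ s in Ioo t b, g s
      = ∫ s in Ioo a b, (∫ t in Ioo a s, f t) * g s := by
  set μ := volume.restrict (Ioo a b)
  set H : ℝ × ℝ → ℝ := {q | q.1 < q.2}.indicator fun q => f q.1 * g q.2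
  have hH_left : ∀ t, (fun s => H (t, s)) = (Ioi t).indicator fun s => f t * g s := fun t => by
    ext s; simp [H, indicator_apply]
  have hH_right : ∀ s, (fun t => H (t, s)) = (Iio s).indicator fun t => f t * g s := fun s => by
    ext t; simp [H, indicator_apply]
  have hH_left_int : ∀ t ∈ Ioo a b, ∫ s, H (t, s) ∂μ = f t * ∫ s in Ioo t b, g s :=
    fun t ht => by
      rw [hH_left, integral_indicator measurableSet_Ioi,
        Measure.restrict_restrict measurableSet_Ioi, Ioi_inter_Ioo, max_eq_left ht.1.le,
        integral_const_mul]
  have hH_right_int : ∀ s ∈ Ioo a b, ∫ t, H (t, s) ∂μ = (∫ t in Ioo a s, f t) * g s :=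
    fun s hs => by
      rw [hH_right, integral_indicator measurableSet_Iio,
        Measure.restrict_restrict measurableSet_Iio, Iio_inter_Ioo, min_eq_left hs.2.le,
        integral_mul_const]
  have hHm : AEStronglyMeasurable H (μ.prod μ) :=
    ((hfm.comp_quasiMeasurePreserving Measure.quasiMeasurePreserving_fst).mul
      (hgi.aestronglyMeasurable.comp_quasiMeasurePreserving
        Measure.quasiMeasurePreserving_snd)).indicator
      (measurableSet_lt measurable_fst measurable_snd)
  have hHi : Integrable H (μ.prod μ) := by
    refine (integrable_prod_iff hHm).2
      ⟨ae_restrict_of_forall_mem measurableSet_Ioo fun t _ => ?_, ?_⟩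
    · rw [hH_left]
      exact (hgi.const_mul _).indicator measurableSet_Ioi
    · refine hfg.congr (ae_restrict_of_forall_mem measurableSet_Ioo fun t ht => ?_)
      dsimp only
      rw [← hH_left_int t ht]
      refine integral_congr_ae (ae_restrict_of_forall_mem measurableSet_Ioo fun s hs => ?_)
      exact (Real.norm_of_nonneg <|
        indicator_nonneg (fun q _ => mul_nonneg (hf t ht) (hg s hs)) _).symm
  calc ∫ t in Ioo a b, f t * ∫ s in Ioo t b, g s = ∫ t, ∫ s, H (t, s) ∂μ ∂μ :=
        setIntegral_congr_fun measurableSet_Ioo fun t ht => (hH_left_int t ht).symm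
    _ = ∫ s, ∫ t, H (t, s) ∂μ ∂μ := integral_integral_swap hHi
    _ = _ := setIntegral_congr_fun measurableSet_Ioo hH_right_int

end SetIntegralIoo

section Hardy

variable {p σ c x D : ℝ} {u W : ℝ → ℝ}

theorem setIntegral_Ioo_rpow_integral_mul_eq (hp : 1 < p) (hxD : x ≤ D)
    (hu : ∀ t ∈ Ioo x D, 0 ≤ u t) (hum : AEStronglyMeasurable u (volume.restrict (Ioo x D)))
    (hW : ∀ s ∈ Ioo x D, 0 ≤ W s) (hWI : IntegrableOn W (Ioo x D))
    (hgI : IntegrableOn (fun t => (∫ s in Ioo t D, W s) ^ p * u t) (Ioo x D)) :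
    ∫ t in Ioo x D, (∫ s in Ioo t D, W s) ^ p * u t
      = p * ∫ s in Ioo x D,
          (∫ t in Ioo x s, u t) * ((∫ r in Ioo s D, W r) ^ (p - 1) * W s) := by
  set N : ℝ → ℝ := fun s => ∫ r in Ioo s D, W r
  have hp0 : p ≠ 0 := by linarith
  have hN_rpow : ∀ t ∈ Ioo x D,
      N t ^ p * u t = p * (u t * ∫ s in Ioo t D, N s ^ (p - 1) * W s) := fun t ht => by
    rw [setIntegral_Ioo_rpow_integral_mul hp.le ht.2.le
      (hWI.mono_set (Ioo_subset_Ioo_left ht.1.le))]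
    field_simp
    exact mul_comm _ _
  have hg0 : ∀ s ∈ Ioo x D, 0 ≤ N s ^ (p - 1) * W s := fun s hs =>
    mul_nonneg (Real.rpow_nonneg (setIntegral_nonneg measurableSet_Ioo fun r hr =>
      hW r ⟨hs.1.trans hr.1, hr.2⟩) _) (hW s hs)
  have hfg : IntegrableOn (fun t => u t * ∫ s in Ioo t D, N s ^ (p - 1) * W s) (Ioo x D) :=
    IntegrableOn.congr_fun (hgI.const_mul p⁻¹) (fun t ht => by
      change p⁻¹ * (N t ^ p * u t) = _
      rw [hN_rpow t ht]
      field_simp) measurableSet_Ioo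
  rw [setIntegral_congr_fun measurableSet_Ioo hN_rpow, integral_const_mul,
    setIntegral_Ioo_mul_setIntegral_Ioo_swap hu hg0 hum
      (integrableOn_Ioo_rpow_integral_mul hp.le hxD hWI) hfg]

theorem setIntegral_Ioo_rpow_integral_mul_le (hp : 1 < p) (hxD : x ≤ D)
    (hu : ∀ t ∈ Ioo x D, 0 ≤ u t) (hum : AEStronglyMeasurable u (volume.restrict (Ioo x D)))
    (hW : ∀ s ∈ Ioo x D, 0 ≤ W s) (hWI : IntegrableOn W (Ioo x D))
    (hgI : IntegrableOn (fun t => (∫ s in Ioo t D, W s) ^ p * u t) (Ioo x D))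
    (hσ : ∀ s ∈ Ioo x D,
      (c + ∫ t in Ioo x s, u t) * (∫ r in Ioo s D, W r) ^ (p - 1) ≤ σ) :
    ∫ t in Ioo x D, (∫ s in Ioo t D, W s) ^ p * u t
      ≤ p * σ * (∫ s in Ioo x D, W s) - c * (∫ s in Ioo x D, W s) ^ p := by
  set g : ℝ → ℝ := fun s => (∫ r in Ioo s D, W r) ^ (p - 1) * W s
  have hgi : IntegrableOn g (Ioo x D) := integrableOn_Ioo_rpow_integral_mul hp.le hxD hWI
  have hlhs_nonneg : ∀ s ∈ Ioo x D, 0 ≤ (∫ t in Ioo x s, u t) * g s := fun s hs =>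
    mul_nonneg (setIntegral_nonneg measurableSet_Ioo fun t ht => hu t ⟨ht.1, ht.2.trans hs.2⟩)
      (mul_nonneg (Real.rpow_nonneg (setIntegral_nonneg measurableSet_Ioo fun r hr =>
        hW r ⟨hs.1.trans hr.1, hr.2⟩) _) (hW s hs))
  have hbound : ∀ s ∈ Ioo x D, (∫ t in Ioo x s, u t) * g s ≤ σ * W s - c * g s :=
    fun s hs => by linear_combination mul_le_mul_of_nonneg_right (hσ s hs) (hW s hs)
  calc ∫ t in Ioo x D, (∫ s in Ioo t D, W s) ^ p * u t
      = p * ∫ s in Ioo x D, (∫ t in Ioo x s, u t) * g s :=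
        setIntegral_Ioo_rpow_integral_mul_eq hp hxD hu hum hW hWI hgI
    _ ≤ p * ∫ s in Ioo x D, (σ * W s - c * g s) :=
        mul_le_mul_of_nonneg_left (integral_mono_of_nonneg
          (ae_restrict_of_forall_mem measurableSet_Ioo hlhs_nonneg)
          ((hWI.const_mul σ).sub (hgi.const_mul c))
          (ae_restrict_of_forall_mem measurableSet_Ioo hbound)) (by linarith)
    _ = p * σ * (∫ s in Ioo x D, W s) - c * (∫ s in Ioo x D, W s) ^ p := by
        rw [integral_sub (hWI.const_mul σ) (hgi.const_mul c), integral_const_mul,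
          integral_const_mul, setIntegral_Ioo_rpow_integral_mul hp.le hxD hWI]
        field_simp

end Hardy

theorem add_inv_mul_le_of_le_sub_mul_rpow {p σ M N T : ℝ} (hN : 0 < N)
    (hT : T ≤ p * σ * N - M * N ^ p) : M * N ^ (p - 1) + N⁻¹ * T ≤ p * σ :=
  calc M * N ^ (p - 1) + N⁻¹ * T ≤ M * N ^ (p - 1) + N⁻¹ * (p * σ * N - M * N ^ p) := by
        gcongr
    _ = p * σ := by
        rw [Real.rpow_sub_one hN.ne']
        field_simp
        ring

theorem stmt8_general (p pstar D : ℝ) (hp : 1 < p)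
    (u v : ℝ → ℝ)
    (hu : ∀ x ∈ Ioo (0:ℝ) D, 0 < u x) (hv : ∀ x ∈ Ioo (0:ℝ) D, 0 < v x)
    (huI : ∀ x ∈ Ioo (0:ℝ) D, IntegrableOn u (Ioo 0 x))
    (hvI : ∀ x ∈ Ioo (0:ℝ) D, IntegrableOn (fun s => v s ^ (1 - pstar)) (Ioo x D))
    (hgI : ∀ x ∈ Ioo (0:ℝ) D,
      IntegrableOn (fun t => (∫ s in Ioo t D, v s ^ (1 - pstar)) ^ p * u t) (Ioo x D))
    (σ δ : ℝ)
    (hσ : IsLUB {r : ℝ | ∃ x ∈ Ioo (0:ℝ) D,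
      r = (∫ t in Ioo 0 x, u t) * (∫ s in Ioo x D, v s ^ (1 - pstar)) ^ (p - 1)} σ)
    (hδ : IsLUB {r : ℝ | ∃ x ∈ Ioo (0:ℝ) D,
      r = (∫ t in Ioo 0 x, u t) * (∫ s in Ioo x D, v s ^ (1 - pstar)) ^ (p - 1)
        + (∫ s in Ioo x D, v s ^ (1 - pstar))⁻¹ *
          ∫ t in Ioo x D, (∫ s in Ioo t D, v s ^ (1 - pstar)) ^ p * u t} δ) :
    σ ≤ δ ∧ δ ≤ p * σ := by
  have hW : ∀ s ∈ Ioo 0 D, 0 < v s ^ (1 - pstar) := fun s hs => Real.rpow_pos_of_pos (hv s hs) _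
  have hN : ∀ x ∈ Ioo 0 D, 0 < ∫ s in Ioo x D, v s ^ (1 - pstar) := fun x hx =>
    setIntegral_Ioo_pos hx.2 (hvI x hx) fun s hs => hW s ⟨hx.1.trans hs.1, hs.2⟩
  refine ⟨hσ.2 ?_, hδ.2 ?_⟩ <;> rintro _ ⟨x, hx, rfl⟩
  · have hT : 0 ≤ ∫ t in Ioo x D, (∫ s in Ioo t D, v s ^ (1 - pstar)) ^ p * u t :=
      setIntegral_nonneg measurableSet_Ioo fun t ht =>
        mul_nonneg (Real.rpow_nonneg (hN t ⟨hx.1.trans ht.1, ht.2⟩).le _)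
          (hu t ⟨hx.1.trans ht.1, ht.2⟩).le
    exact (le_add_of_nonneg_right (mul_nonneg (inv_nonneg.2 (hN x hx).le) hT)).trans
      (hδ.1 ⟨x, hx, rfl⟩)
  · refine add_inv_mul_le_of_le_sub_mul_rpow (hN x hx) <|
      setIntegral_Ioo_rpow_integral_mul_le hp hx.2.le
        (fun t ht => (hu t ⟨hx.1.trans ht.1, ht.2⟩).le)
        ((aestronglyMeasurable_Ioo_of_forall_integrableOn huI).mono_set
          (Ioo_subset_Ioo_left hx.1.le))
        (fun s hs => (hW s ⟨hx.1.trans hs.1, hs.2⟩).le) (hvI x hx) (hgI x hx) fun s hs => ?_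
    rw [setIntegral_Ioo_add_setIntegral_Ioo hx.1.le hs.1.le (huI s ⟨hx.1.trans hs.1, hs.2⟩)]
    exact hσ.1 ⟨s, ⟨hx.1.trans hs.1, hs.2⟩, rfl⟩

/-- Basic comparison `σ_p ≤ δ̄₁ ≤ p σ_p` for the improved lower-bound quantity `δ̄₁`. -/
theorem stmt8 (p pstar D : ℝ) (hp : 1 < p) (hconj : 1/p + 1/pstar = 1) (hD : 0 < D)
    (u v : ℝ → ℝ)
    (hu : ∀ x ∈ Ioo (0:ℝ) D, 0 < u x) (hv : ∀ x ∈ Ioo (0:ℝ) D, 0 < v x)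
    (huI : ∀ x ∈ Ioo (0:ℝ) D, IntegrableOn u (Ioo 0 x))
    (hvI : ∀ x ∈ Ioo (0:ℝ) D, IntegrableOn (fun s => v s ^ (1 - pstar)) (Ioo x D))
    (hgI : ∀ x ∈ Ioo (0:ℝ) D,
      IntegrableOn (fun t => (∫ s in Ioo t D, v s ^ (1 - pstar)) ^ p * u t) (Ioo x D))
    (σ δ : ℝ)
    (hσ : IsLUB {r : ℝ | ∃ x ∈ Ioo (0:ℝ) D,
      r = (∫ t in Ioo 0 x, u t) * (∫ s in Ioo x D, v s ^ (1 - pstar)) ^ (p - 1)} σ)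
    (hδ : IsLUB {r : ℝ | ∃ x ∈ Ioo (0:ℝ) D,
      r = (∫ t in Ioo 0 x, u t) * (∫ s in Ioo x D, v s ^ (1 - pstar)) ^ (p - 1)
        + (∫ s in Ioo x D, v s ^ (1 - pstar))⁻¹ *
          ∫ t in Ioo x D, (∫ s in Ioo t D, v s ^ (1 - pstar)) ^ p * u t} δ) :
    σ ≤ δ ∧ δ ≤ p * σ :=
  stmt8_general p pstar D hp u v hu hv huI hvI hgI σ δ hσ hδ
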